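/- Let V be a real inner product space, let ξ ∈ V be a unit vector, let η be the linear form η(X) = ⟨X, ξ⟩, let a ∈ ℝ, let δ : V → ℝ be a linear form with a² + δ(ξ) ≠ 0, and let α be a symmetric bilinear form on V. Suppose that for all X, Y ∈ V: α(a²·(η(X)·Y - η(Y)·X) + δ(Y)·(-X + η(X)·ξ) - δ(X)·(-Y + η(Y)·ξ), ξ) = 0. Then α(Y, ξ) = η(Y)·α(ξ, ξ) for every Y ∈ V. -/
import Mathlib


open RealInnerProductSpace

/-- The pointwise content of equation (2.3) under the regularity hypothesis
`a² + δ(ξ) ≠ 0` (i.e. `f² + ξ(f) ≠ 0`): a symmetric bilinear form `α` with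
`α(R(X,Y)ξ, ξ) = 0` for the f-Kenmotsu curvature satisfies
`α(Y,ξ) = η(Y)·α(ξ,ξ)`. -/
theorem stmt_2 {V : Type*} [NormedAddCommGroup V] [InnerProductSpace ℝ V]
    (ξ : V) (hξ : ‖ξ‖ = 1)
    (η : V → ℝ) (hη : ∀ X, η X = ⟪X, ξ⟫)
    (a : ℝ) (δ : V →ₗ[ℝ] ℝ) (hreg : a ^ 2 + δ ξ ≠ 0)
    (α : V →ₗ[ℝ] V →ₗ[ℝ] ℝ) (hsymm : ∀ X Y : V, α X Y = α Y X)
    (h : ∀ X Y : V,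
      α (a ^ 2 • ((η X) • Y - (η Y) • X)
        + (δ Y) • (-X + (η X) • ξ) - (δ X) • (-Y + (η Y) • ξ)) ξ = 0) :
    ∀ Y : V, α Y ξ = η Y * α ξ ξ := by
  intro Y
  have hηξ : η ξ = 1 := by
    rw [hη, real_inner_self_eq_norm_sq, hξ]; norm_num
  have h1 := h ξ Y
  rw [hηξ] at h1
  have harg : a ^ 2 • ((1 : ℝ) • Y - η Y • ξ) + δ Y • (-ξ + (1 : ℝ) • ξ)
      - δ ξ • (-Y + η Y • ξ) = (a ^ 2 + δ ξ) • (Y - η Y • ξ) := by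
    module
  rw [harg] at h1
  have h2 : α (Y - η Y • ξ) ξ = 0 := by
    have := h1
    rw [map_smul] at this
    simpa using (smul_eq_zero.mp (by simpa using this)).resolve_left hreg
  have := h2
  rw [map_sub, map_smul] at this
  simp only [LinearMap.sub_apply, LinearMap.smul_apply, smul_eq_mul] at this
  linarith
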